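/- Let f(v) = -v + c with c > 0 and let s : (0,∞) → ℝ be convex with f(v) ≤ s(v) for all v > 0, s bounded above by c, lim_{v→0⁺} s(v) = c, and suppose there exists v₀ > 0 with s(v₀) > f(v₀). Then the set {v > 0 : s(v) = f(v)} is an interval of the form (0, b] for some b > 0, or is empty, i.e., it is downward closed in (0,∞): if s(v) = f(v) and 0 < u ≤ v then s(u) = f(u). -/

import Mathlib

open Set Filter Topology

theorem ConvexOn.slope_le_of_tendsto_nhdsGT {f : ℝ → ℝ} {a L u v : ℝ}
    (hf : ConvexOn ℝ (Ioi a) f) (hlim : Tendsto f (𝓝[>] a) (𝓝 L)) (hau : a < u)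
    (huv : u < v) : (f u - L) / (u - a) ≤ (f v - f u) / (v - u) := by
  have hslope : Tendsto (fun t ↦ (f u - f t) / (u - t)) (𝓝[>] a) (𝓝 ((f u - L) / (u - a))) :=
    (tendsto_const_nhds.sub hlim).div
      (tendsto_const_nhds.sub (tendsto_id.mono_left nhdsWithin_le_nhds))
      (sub_ne_zero.2 hau.ne')
  refine le_of_tendsto hslope ?_
  filter_upwards [Ioo_mem_nhdsGT hau] with t ht
  exact hf.slope_mono_adjacent ht.1 (mem_Ioi.2 (hau.trans huv)) ht.2 huv

theorem stmt2_general (c : ℝ) (s : ℝ → ℝ)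
    (hconv : ConvexOn ℝ (Set.Ioi (0:ℝ)) s)
    (hfs : ∀ v > (0:ℝ), -v + c ≤ s v)
    (hlim : Filter.Tendsto s (nhdsWithin 0 (Set.Ioi 0)) (nhds c)) :
    ∀ u v : ℝ, 0 < u → u ≤ v → s v = -v + c → s u = -u + c := by
  intro u v hu huv hsv
  rcases huv.eq_or_lt with rfl | huv
  · exact hsv
  have hslope := hconv.slope_le_of_tendsto_nhdsGT hlim hu huv
  rw [sub_zero, div_le_div_iff₀ hu (sub_pos.2 huv), hsv] at hslope
  have hprod : v * (s u + u - c) ≤ 0 := by linear_combination hslope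
  have hle : s u + u - c ≤ 0 := nonpos_of_mul_nonpos_right hprod (hu.trans huv)
  exact le_antisymm (by linarith) (hfs u hu)

/-- The contact set `{v > 0 : s v = f v}` of a convex value function `s` with the
affine reward `f v = -v + c` is downward closed in `(0,∞)`. -/
theorem stmt2 (c : ℝ) (hc : 0 < c) (s : ℝ → ℝ)
    (hconv : ConvexOn ℝ (Set.Ioi (0:ℝ)) s)
    (hfs : ∀ v > (0:ℝ), -v + c ≤ s v)
    (hsc : ∀ v > (0:ℝ), s v ≤ c)
    (hlim : Filter.Tendsto s (nhdsWithin 0 (Set.Ioi 0)) (nhds c))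
    (v₀ : ℝ) (hv₀ : 0 < v₀) (hstrict : -v₀ + c < s v₀) :
    ∀ u v : ℝ, 0 < u → u ≤ v → s v = -v + c → s u = -u + c :=
  stmt2_general c s hconv hfs hlim
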